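/- arXiv:2312.04235 — 3 statements merged into one kernel-verified Lean document; each statement's English description precedes it below -/
import Mathlib

section
/- Let G be a graph of discrete highway dimension at most h. Then for every r > 0, G has an (r,h) vertex cover; that is, there exists a set C ⊆ V such that every shortest path p(v1,v2) with d(v1,v2) > r and maxedge(p(v1,v2)) ≤ r contains a vertex of C, and |B(v,2r) ∩ C| ≤ h for every v ∈ V. -/
open SimpleGraph

/-- The length (total weight) of a walk under an edge-weight function `w`. -/
noncomputable def wlen {V : Type*} {G : SimpleGraph V} (w : Sym2 V → ℝ) {u v : V}
    (p : G.Walk u v) : ℝ :=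
  (p.edges.map w).sum

/-- `p` is a subwalk (subpath) of `q`. -/
def IsSubwalk {V : Type*} {G : SimpleGraph V} {u v a b : V}
    (p : G.Walk u v) (q : G.Walk a b) : Prop :=
  ∃ (q1 : G.Walk a u) (q2 : G.Walk v b), q = (q1.append p).append q2

/-- Shortest-path distance as the infimum of walk lengths. -/
noncomputable def wdist {V : Type*} (G : SimpleGraph V) (w : Sym2 V → ℝ) (u v : V) : ℝ :=
  sInf {x : ℝ | ∃ p : G.Walk u v, x = wlen w p}

/-- A finite connected positively-weighted graph (all weights at least 1) with
unique shortest paths, in which every edge is the unique shortest path between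
its endpoints.  `sp u v` is the unique shortest path from `u` to `v`. -/
structure Setting (V : Type) [Fintype V] where
  G : SimpleGraph V
  w : Sym2 V → ℝ
  connected : G.Connected
  one_le_w : ∀ e ∈ G.edgeSet, 1 ≤ w e
  sp : ∀ u v : V, G.Walk u v
  sp_isPath : ∀ u v : V, (sp u v).IsPath
  sp_shortest : ∀ (u v : V) (q : G.Walk u v), wlen w (sp u v) ≤ wlen w q
  sp_unique : ∀ (u v : V) (q : G.Walk u v), q.IsPath →
    wlen w q = wlen w (sp u v) → q = sp u v
  edge_sp : ∀ (u v : V) (h : G.Adj u v),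
    sp u v = SimpleGraph.Walk.cons h SimpleGraph.Walk.nil

namespace Setting

variable {V : Type} [Fintype V]

/-- Shortest-path distance `d(u,v)`. -/
noncomputable def d (S : Setting V) (u v : V) : ℝ := wlen S.w (S.sp u v)

/-- The ball `B(v,r)`. -/
def ball (S : Setting V) (v : V) (r : ℝ) : Set V := {u : V | S.d v u ≤ r}

/-- `maxedge(p(u,v)) ≤ r`: every edge of the shortest path has weight at most `r`. -/
def maxedgeLE (S : Setting V) (u v : V) (r : ℝ) : Prop :=
  ∀ e ∈ (S.sp u v).edges, S.w e ≤ r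

/-- An `(r,k)` vertex cover. -/
def IsVertexCover (S : Setting V) (r : ℝ) (k : ℕ) (C : Set V) : Prop :=
  (∀ v1 v2 : V, r < S.d v1 v2 → S.maxedgeLE v1 v2 r →
      ∃ c ∈ C, c ∈ (S.sp v1 v2).support) ∧
  (∀ v : V, (S.ball v (2 * r) ∩ C).ncard ≤ k)

/-- Discrete highway dimension at most `h`. -/
def DiscreteHDLE (S : Setting V) (h : ℕ) : Prop :=
  ∀ (v : V) (r : ℝ), 0 < r →
    ∃ C : Set V, C.ncard ≤ h ∧
      ∀ v1 v2 : V, (∀ x ∈ (S.sp v1 v2).support, x ∈ S.ball v (4 * r)) →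
        r < S.d v1 v2 → ∃ c ∈ C, c ∈ (S.sp v1 v2).support

/-- The (unique) shortest path from `v1` to `v2` is `r`-significant:
it has an `r`-witness. -/
def RSignificant (S : Setting V) (r : ℝ) (v1 v2 : V) : Prop :=
  ∃ a b : V, (a = v1 ∨ S.G.Adj a v1) ∧ (b = v2 ∨ S.G.Adj b v2) ∧
    r ≤ S.d a b ∧ IsSubwalk (S.sp v1 v2) (S.sp a b)

/-- The shortest path from `v1` to `v2` is `(r,2r)`-close to `v`,
i.e. it belongs to `S(v,r)`. -/
def InSvr (S : Setting V) (v : V) (r : ℝ) (v1 v2 : V) : Prop :=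
  ∃ a b : V, (a = v1 ∨ S.G.Adj a v1) ∧ (b = v2 ∨ S.G.Adj b v2) ∧
    r ≤ S.d a b ∧ IsSubwalk (S.sp v1 v2) (S.sp a b) ∧
    ∃ x ∈ (S.sp a b).support, S.d v x ≤ 2 * r

/-- Highway dimension at most `h`. -/
def HighwayDimLE (S : Setting V) (h : ℕ) : Prop :=
  ∀ (r : ℝ), 0 < r → ∀ v : V,
    ∃ C : Set V, C.ncard ≤ h ∧
      ∀ v1 v2 : V, S.InSvr v r v1 v2 → ∃ c ∈ C, c ∈ (S.sp v1 v2).support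

/-- An `(r,h')`-SPHS. -/
def IsSPHS (S : Setting V) (r : ℝ) (h' : ℕ) (C : Set V) : Prop :=
  (∀ v1 v2 : V, S.RSignificant r v1 v2 → ∃ c ∈ C, c ∈ (S.sp v1 v2).support) ∧
  (∀ v : V, (C ∩ S.ball v (2 * r)).ncard ≤ h')

/-- Adjacency in the `r`-shortcut graph `G(C,r)`. -/
def shortcutAdj (S : Setting V) (C : Set V) (r : ℝ) (v1 v2 : V) : Prop :=
  v1 ≠ v2 ∧ v1 ∈ C ∧ v2 ∈ C ∧ S.d v1 v2 ≤ r ∧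
    ∀ c ∈ C, c ∈ (S.sp v1 v2).support → c = v1 ∨ c = v2

/-- An `(r,η)` path cover, a set of shortest paths represented by their
endpoint pairs. -/
def IsPathCover (S : Setting V) (r : ℝ) (η : ℕ) (P : Set (V × V)) : Prop :=
  (∀ q ∈ P, r / 4 ≤ S.d q.1 q.2 ∧ S.d q.1 q.2 ≤ r) ∧
  (∀ v1 v2 : V, r / 2 ≤ S.d v1 v2 → S.d v1 v2 ≤ r → S.maxedgeLE v1 v2 (r / 8) →
    ∃ q ∈ P, IsSubwalk (S.sp q.1 q.2) (S.sp v1 v2) ∧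
      S.d v1 q.1 ≤ r / 8 ∧ S.d q.2 v2 ≤ r / 8) ∧
  (∀ v : V, {q ∈ P | ∃ x ∈ (S.sp q.1 q.2).support, S.d v x ≤ 4 * r}.ncard ≤ η)

/-- A pair of vertices of `Cm` is *considered* at level `i`. -/
def Considered (S : Setting V) (Cm : Set V) (i : ℤ) (q : V × V) : Prop :=
  q.1 ∈ Cm ∧ q.2 ∈ Cm ∧
    3 / 4 * (8 : ℝ) ^ i ≤ S.d q.1 q.2 ∧ S.d q.1 q.2 ≤ (8 : ℝ) ^ i ∧
    S.maxedgeLE q.1 q.2 ((8 : ℝ) ^ (i - 1))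

/-- `C'` is a valid output of the greedy construction at level `i` from `Cm`. -/
def ValidGreedy (S : Setting V) (Cm : Set V) (i : ℤ) (C' : Set V) : Prop :=
  ∃ (m : ℕ) (q : Fin m → V × V),
    Function.Injective q ∧
    (∀ p : V × V, S.Considered Cm i p ↔ ∃ j : Fin m, q j = p) ∧
    ∃ Sc : Fin (m + 1) → Set V,
      Sc 0 = ∅ ∧ Sc (Fin.last m) = C' ∧
      ∀ j : Fin m,
        ((∃ c ∈ Sc j.castSucc, c ∈ (S.sp (q j).1 (q j).2).support) →
          Sc j.succ = Sc j.castSucc) ∧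
        ((¬ ∃ c ∈ Sc j.castSucc, c ∈ (S.sp (q j).1 (q j).2).support) →
          ∃ c ∈ Cm, c ∈ (S.sp (q j).1 (q j).2).support ∧
            (∀ c' ∈ Cm, c' ∈ (S.sp (q j).1 (q j).2).support →
              |S.d (q j).1 c - S.d (q j).1 (q j).2 / 2| ≤
                |S.d (q j).1 c' - S.d (q j).1 (q j).2 / 2|) ∧
            Sc j.succ = insert c (Sc j.castSucc))

/-- The set of endpoints of edges of weight greater than `t`. -/
def bigEdgeEnds (S : Setting V) (t : ℝ) : Set V :=
  {x : V | ∃ e ∈ S.G.edgeSet, t < S.w e ∧ x ∈ e}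

/- Auxiliary lemmas -/

lemma wlen_append' {G : SimpleGraph V} (w : Sym2 V → ℝ) {u v x : V}
    (p : G.Walk u v) (q : G.Walk v x) :
    wlen w (p.append q) = wlen w p + wlen w q := by
  simp [wlen, SimpleGraph.Walk.edges_append]

lemma wlen_nonneg (S : Setting V) {u v : V} (p : S.G.Walk u v) : 0 ≤ wlen S.w p := by
  apply List.sum_nonneg
  intro a ha
  obtain ⟨e, he, rfl⟩ := List.mem_map.1 ha
  exact le_trans zero_le_one (S.one_le_w e (p.edges_subset_edgeSet he))

lemma wlen_reverse (S : Setting V) {u v : V} (p : S.G.Walk u v) :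
    wlen S.w p.reverse = wlen S.w p := by
  simp [wlen, SimpleGraph.Walk.edges_reverse, List.sum_reverse]

lemma d_le (S : Setting V) {u v : V} (p : S.G.Walk u v) : S.d u v ≤ wlen S.w p :=
  S.sp_shortest u v p

lemma d_nonneg (S : Setting V) (u v : V) : 0 ≤ S.d u v := S.wlen_nonneg _

lemma d_self (S : Setting V) (u : V) : S.d u u = 0 :=
  le_antisymm (by simpa [wlen] using S.d_le (Walk.nil : S.G.Walk u u)) (S.d_nonneg u u)

lemma d_symm (S : Setting V) (u v : V) : S.d u v = S.d v u :=
  le_antisymm (by simpa [S.wlen_reverse, Setting.d] using S.d_le (S.sp v u).reverse)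
    (by simpa [S.wlen_reverse, Setting.d] using S.d_le (S.sp u v).reverse)

lemma d_triangle (S : Setting V) (u v x : V) : S.d u x ≤ S.d u v + S.d v x := by
  have h := S.d_le ((S.sp u v).append (S.sp v x))
  rwa [wlen_append'] at h

lemma prefix_eq (S : Setting V) {v1 v2 m : V} {q1 : S.G.Walk v1 m} {q2 : S.G.Walk m v2}
    (hq : S.sp v1 v2 = q1.append q2) : q1 = S.sp v1 m := by
  have hpath : (q1.append q2).IsPath := hq ▸ S.sp_isPath v1 v2
  have hw : wlen S.w q1 + wlen S.w q2 = wlen S.w (S.sp v1 v2) := by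
    rw [hq, wlen_append']
  have h2 : wlen S.w (S.sp v1 v2) ≤ wlen S.w (S.sp v1 m) + wlen S.w q2 := by
    have h := S.sp_shortest v1 v2 ((S.sp v1 m).append q2)
    rwa [wlen_append'] at h
  have h3 : wlen S.w q1 ≤ wlen S.w (S.sp v1 m) := by linarith
  exact S.sp_unique v1 m q1 hpath.of_append_left
    (le_antisymm h3 (S.sp_shortest v1 m q1))

lemma d_support_le (S : Setting V) {a b x y : V} (hx : x ∈ (S.sp a b).support)
    (hy : y ∈ (S.sp a b).support) : S.d x y ≤ S.d a b := by
  classical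
  have hspec := ((S.sp a b).take_spec hx).symm
  set t := (S.sp a b).takeUntil x hx with ht
  set dr := (S.sp a b).dropUntil x hx with hdr
  have hwsum : wlen S.w t + wlen S.w dr = S.d a b := by
    have hd : S.d a b = wlen S.w (t.append dr) := congrArg (wlen S.w) hspec
    rw [wlen_append'] at hd
    linarith
  rw [hspec, SimpleGraph.Walk.mem_support_append_iff] at hy
  rcases hy with hy | hy
  · -- y before x on the path
    have hspec2 : t = (t.takeUntil y hy).append (t.dropUntil y hy) :=
      (t.take_spec hy).symm
    have h1 : S.d y x ≤ wlen S.w (t.dropUntil y hy) := S.d_le _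
    have h2 := congrArg (wlen S.w) hspec2
    rw [wlen_append'] at h2
    have h3 := S.wlen_nonneg (t.takeUntil y hy)
    have h4 := S.wlen_nonneg dr
    rw [S.d_symm x y]
    linarith
  · -- y after x
    have hspec2 : dr = (dr.takeUntil y hy).append (dr.dropUntil y hy) :=
      (dr.take_spec hy).symm
    have h1 : S.d x y ≤ wlen S.w (dr.takeUntil y hy) := S.d_le _
    have h2 := congrArg (wlen S.w) hspec2
    rw [wlen_append'] at h2
    have h3 := S.wlen_nonneg (dr.dropUntil y hy)
    have h4 := S.wlen_nonneg t
    linarith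

/-- Key subpath lemma: on a shortest path longer than `r` with all edges of
weight at most `r`, there is a vertex `u` with `r < d(v1,u) ≤ 2r`. -/
lemma exists_mid (S : Setting V) {v1 v2 : V} {r : ℝ} (hr : 0 < r)
    (hd : r < S.d v1 v2) (hme : S.maxedgeLE v1 v2 r) :
    ∃ u, r < S.d v1 u ∧ S.d v1 u ≤ 2 * r ∧
      ∀ y ∈ (S.sp v1 u).support, y ∈ (S.sp v1 v2).support := by
  classical
  set F : Finset V := (S.sp v1 v2).support.toFinset.filter (fun u => S.d v1 u ≤ r) with hF
  have hv1F : v1 ∈ F := by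
    simp only [hF, Finset.mem_filter, List.mem_toFinset]
    exact ⟨(S.sp v1 v2).start_mem_support, by rw [S.d_self]; exact hr.le⟩
  obtain ⟨u, huF, hmax⟩ := F.exists_max_image (S.d v1) ⟨v1, hv1F⟩
  simp only [hF, Finset.mem_filter, List.mem_toFinset] at huF
  obtain ⟨hu_sup, hu_le⟩ := huF
  have hune : u ≠ v2 := by rintro rfl; exact absurd hd (not_lt.2 hu_le)
  have hspec : S.sp v1 v2 =
      ((S.sp v1 v2).takeUntil u hu_sup).append ((S.sp v1 v2).dropUntil u hu_sup) :=
    ((S.sp v1 v2).take_spec hu_sup).symm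
  obtain ⟨x, hadj, d', hdrop⟩ :=
    SimpleGraph.Walk.not_nil_iff.1
      (SimpleGraph.Walk.not_nil_of_ne hune (p := (S.sp v1 v2).dropUntil u hu_sup))
  have hq : S.sp v1 v2 =
      (((S.sp v1 v2).takeUntil u hu_sup).append (Walk.cons hadj Walk.nil)).append d' := by
    conv_lhs => rw [hspec, hdrop]
    rw [← SimpleGraph.Walk.append_assoc]
    rfl
  have htake : (S.sp v1 v2).takeUntil u hu_sup = S.sp v1 u := S.prefix_eq hspec
  have hq1 : ((S.sp v1 v2).takeUntil u hu_sup).append (Walk.cons hadj Walk.nil) =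
      S.sp v1 x := S.prefix_eq hq
  have hemem : s(u, x) ∈ (S.sp v1 v2).edges := by
    rw [hq]
    simp [SimpleGraph.Walk.edges_append]
  have hwle : S.w s(u, x) ≤ r := hme _ hemem
  have hwge : (1 : ℝ) ≤ S.w s(u, x) := S.one_le_w _ (S.G.mem_edgeSet.2 hadj)
  have hdx : S.d v1 x = S.d v1 u + S.w s(u, x) := by
    have h0 : S.d v1 x =
        wlen S.w (((S.sp v1 v2).takeUntil u hu_sup).append (Walk.cons hadj Walk.nil)) :=
      congrArg (wlen S.w) hq1.symm
    rw [wlen_append', htake] at h0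
    simpa [wlen, Setting.d] using h0
  have hxsup : x ∈ (S.sp v1 v2).support := by
    rw [hq, SimpleGraph.Walk.mem_support_append_iff]
    exact Or.inr d'.start_mem_support
  refine ⟨x, ?_, ?_, ?_⟩
  · by_contra hle
    push_neg at hle
    have hxF : x ∈ F := by
      simp only [hF, Finset.mem_filter, List.mem_toFinset]
      exact ⟨hxsup, hle⟩
    have := hmax x hxF
    rw [hdx] at this
    linarith
  · rw [hdx]; linarith
  · intro y hy
    rw [← hq1, SimpleGraph.Walk.mem_support_append_iff] at hy
    rcases hy with hy | hy
    · exact SimpleGraph.Walk.support_takeUntil_subset _ _ hy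
    · simp only [SimpleGraph.Walk.support_cons, SimpleGraph.Walk.support_nil,
        List.mem_cons, List.mem_singleton] at hy
      rcases hy with rfl | rfl | hy
      · exact hu_sup
      · exact hxsup
      · simp at hy

end Setting

/-- A graph of discrete highway dimension at most `h` has an
`(r,h)` vertex cover for every `r > 0`. -/
theorem stmt0 {V : Type} [Fintype V] (S : Setting V) (h : ℕ)
    (hHD : S.DiscreteHDLE h) (r : ℝ) (hr : 0 < r) :
    ∃ C : Set V, S.IsVertexCover r h C := by
  classical
  -- `Hit C` : `C` hits every shortest path of length in `(r, 2r]`.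
  set Hit : Set V → Prop := fun C =>
    ∀ a b : V, r < S.d a b → S.d a b ≤ 2 * r → ∃ c ∈ C, c ∈ (S.sp a b).support with hHitdef
  have hUniv : Hit Set.univ := fun a b _ _ =>
    ⟨a, Set.mem_univ a, (S.sp a b).start_mem_support⟩
  set T : Set ℕ := {n | ∃ C, Hit C ∧ C.ncard = n} with hT
  have hTne : T.Nonempty := ⟨Set.univ.ncard, Set.univ, hUniv, rfl⟩
  obtain ⟨C, hC, hCcard⟩ : ∃ C, Hit C ∧ C.ncard = sInf T := Nat.sInf_mem hTne
  have hmin : ∀ C' : Set V, Hit C' → C.ncard ≤ C'.ncard := by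
    intro C' hC'
    rw [hCcard]
    exact Nat.sInf_le ⟨C', hC', rfl⟩
  refine ⟨C, ?_, ?_⟩
  · -- covering property
    intro v1 v2 hd hme
    obtain ⟨u, h1, h2, hsub⟩ := S.exists_mid hr hd hme
    obtain ⟨c, hcC, hcsup⟩ := hC v1 u h1 h2
    exact ⟨c, hcC, hsub c hcsup⟩
  · -- sparsity
    intro v
    by_contra hcon
    push_neg at hcon
    obtain ⟨H, hHcard, hHhit⟩ := hHD v r hr
    set C' := (C \ S.ball v (2 * r)) ∪ H with hC'def
    have hC' : Hit C' := by
      intro a b h1 h2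
      obtain ⟨c, hcC, hcsup⟩ := hC a b h1 h2
      by_cases hcball : c ∈ S.ball v (2 * r)
      · have hball : ∀ x ∈ (S.sp a b).support, x ∈ S.ball v (4 * r) := by
          intro x hx
          have h3 : S.d c x ≤ S.d a b := S.d_support_le hcsup hx
          have h4 : S.d v x ≤ S.d v c + S.d c x := S.d_triangle v c x
          have h5 : S.d v c ≤ 2 * r := hcball
          show S.d v x ≤ 4 * r
          linarith
        obtain ⟨c', hc'H, hc's⟩ := hHhit a b hball h1
        exact ⟨c', Or.inr hc'H, hc's⟩
      · exact ⟨c, Or.inl ⟨hcC, hcball⟩, hcsup⟩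
    have hminC' := hmin C' hC'
    have h5 : C'.ncard ≤ (C \ S.ball v (2 * r)).ncard + H.ncard :=
      Set.ncard_union_le _ _
    have h6 : (C ∩ S.ball v (2 * r)).ncard + (C \ S.ball v (2 * r)).ncard = C.ncard :=
      Set.ncard_inter_add_ncard_diff_eq_ncard C (S.ball v (2 * r)) (Set.toFinite C)
    have h7 : (S.ball v (2 * r) ∩ C).ncard = (C ∩ S.ball v (2 * r)).ncard := by
      rw [Set.inter_comm]
    rw [h7] at hcon
    omega
end

section
/- Let G have highway dimension at most h and maximum vertex degree at most Δ. Then for every v ∈ V and every r > 0, the number of edges of G of weight at least r having at least one endpoint in B(v,2r) is at most h·Δ. -/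
open SimpleGraph

/-
A heavy edge `xy` with `x` near `v` is itself a shortest path in `S(v,r)` (it is its own
`r`-witness), so a hitting set `C` of `S(v,r)` with `|C| ≤ h` contains `x` or `y`. Hence every
such edge is incident to `C`, and `C` is incident to at most `|C|·Δ` edges.
-/

theorem SimpleGraph.ncard_incidenceSet_eq_ncard_neighborSet {V : Type*} (G : SimpleGraph V)
    (v : V) : (G.incidenceSet v).ncard = (G.neighborSet v).ncard := by
  classical
  simpa only [Nat.card_coe_set_eq] using Nat.card_congr (G.incidenceSetEquivNeighborSet v)

theorem SimpleGraph.ncard_biUnion_incidenceSet_le {V : Type*} [Finite V] (G : SimpleGraph V)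
    {C : Set V} {Δ : ℕ} (hdeg : ∀ c ∈ C, (G.neighborSet c).ncard ≤ Δ) :
    (⋃ c ∈ C, G.incidenceSet c).ncard ≤ C.ncard * Δ := by
  obtain ⟨t, rfl⟩ := C.toFinite.exists_finset_coe
  simp only [Finset.mem_coe, Set.ncard_coe_finset] at hdeg ⊢
  calc (⋃ c ∈ t, G.incidenceSet c).ncard ≤ ∑ c ∈ t, (G.incidenceSet c).ncard :=
        t.set_ncard_biUnion_le _
    _ ≤ ∑ _c ∈ t, Δ := Finset.sum_le_sum fun c hc =>
        (G.ncard_incidenceSet_eq_ncard_neighborSet c).trans_le (hdeg c hc)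
    _ = t.card * Δ := by rw [Finset.sum_const, smul_eq_mul]

namespace Setting

variable {V : Type} [Fintype V] (S : Setting V) {x y : V}

theorem support_sp_of_adj (hxy : S.G.Adj x y) : (S.sp x y).support = [x, y] := by
  simp [S.edge_sp x y hxy]

theorem d_of_adj (hxy : S.G.Adj x y) : S.d x y = S.w s(x, y) := by
  simp [d, wlen, S.edge_sp x y hxy]

theorem inSvr_of_adj {v : V} {r : ℝ} (hxy : S.G.Adj x y) (hw : r ≤ S.w s(x, y))
    (hx : x ∈ S.ball v (2 * r)) : S.InSvr v r x y :=
  ⟨x, y, .inl rfl, .inl rfl, (S.d_of_adj hxy).symm ▸ hw,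
    ⟨.nil, .nil, by simp⟩, x, (S.sp x y).start_mem_support, hx⟩

theorem heavy_edges_near_subset_biUnion_incidenceSet {v : V} {r : ℝ} {C : Set V}
    (hC : ∀ v1 v2 : V, S.InSvr v r v1 v2 → ∃ c ∈ C, c ∈ (S.sp v1 v2).support) :
    {e : Sym2 V | e ∈ S.G.edgeSet ∧ r ≤ S.w e ∧ ∃ x ∈ e, x ∈ S.ball v (2 * r)}
      ⊆ ⋃ c ∈ C, S.G.incidenceSet c := by
  rintro e ⟨he, hw, x, hxe, hx⟩
  obtain ⟨y, rfl⟩ := Sym2.mem_iff_exists.mp hxe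
  obtain ⟨c, hcC, hc⟩ := hC x y (S.inSvr_of_adj he hw hx)
  rw [S.support_sp_of_adj he, List.mem_pair] at hc
  refine Set.mem_biUnion hcC ⟨he, ?_⟩
  rcases hc with rfl | rfl <;> simp

end Setting

/-- In a graph of highway dimension at most `h` and maximum
degree at most `Δ`, at most `h·Δ` edges of weight at least `r` have an endpoint
in `B(v,2r)`. -/
theorem stmt1 {V : Type} [Fintype V] (S : Setting V) (h Δ : ℕ)
    (hHD : S.HighwayDimLE h)
    (hdeg : ∀ v : V, (S.G.neighborSet v).ncard ≤ Δ)
    (v : V) (r : ℝ) (hr : 0 < r) :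
    {e : Sym2 V | e ∈ S.G.edgeSet ∧ r ≤ S.w e ∧ ∃ x ∈ e, x ∈ S.ball v (2 * r)}.ncard
      ≤ h * Δ := by
  obtain ⟨C, hCcard, hC⟩ := hHD r hr v
  calc _ ≤ (⋃ c ∈ C, S.G.incidenceSet c).ncard :=
        Set.ncard_le_ncard (S.heavy_edges_near_subset_biUnion_incidenceSet hC) (Set.toFinite _)
    _ ≤ C.ncard * Δ := S.G.ncard_biUnion_incidenceSet_le fun c _ => hdeg c
    _ ≤ h * Δ := Nat.mul_le_mul_right Δ hCcard
end

section
/- Let i ≥ 0 be an integer, let C⁻ be an (8^{i-1},k) vertex cover of G, let P be an (8^i,η) path cover of G, and let C' ⊆ C⁻ be a valid output of the greedy construction at level i from C⁻. Then for every v ∈ V, |C' ∩ B(v, 2·8^i)| ≤ η. -/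
open SimpleGraph

namespace StmtAux

set_option linter.unusedSectionVars false

open SimpleGraph Walk

variable {V : Type} [Fintype V]

lemma wlen_nil {G : SimpleGraph V} (w : Sym2 V → ℝ) {u : V} :
    wlen w (Walk.nil : G.Walk u u) = 0 := by
  simp [wlen]

lemma wlen_cons {G : SimpleGraph V} (w : Sym2 V → ℝ) {u x y : V}
    (h : G.Adj u x) (p : G.Walk x y) :
    wlen w (Walk.cons h p) = w s(u, x) + wlen w p := by
  simp [wlen]

lemma wlen_append {G : SimpleGraph V} (w : Sym2 V → ℝ) {u x y : V}
    (p : G.Walk u x) (q : G.Walk x y) :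
    wlen w (p.append q) = wlen w p + wlen w q := by
  simp [wlen, Walk.edges_append]

lemma wlen_nonneg (S : Setting V) {u v : V} (p : S.G.Walk u v) :
    0 ≤ wlen S.w p := by
  apply List.sum_nonneg
  intro x hx
  obtain ⟨e, he, rfl⟩ := List.mem_map.mp hx
  have := S.one_le_w e (p.edges_subset_edgeSet he)
  linarith

lemma one_le_wlen (S : Setting V) {u v : V} (p : S.G.Walk u v) (hne : u ≠ v) :
    1 ≤ wlen S.w p := by
  cases p with
  | nil => exact absurd rfl hne
  | cons h p =>
    rw [wlen_cons]
    have h1 := S.one_le_w _ ((SimpleGraph.mem_edgeSet S.G).mpr h)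
    have h2 := wlen_nonneg S p
    linarith

lemma d_nonneg (S : Setting V) (u v : V) : 0 ≤ S.d u v := wlen_nonneg S _

lemma eq_of_d_le_zero (S : Setting V) {u v : V} (h : S.d u v ≤ 0) : u = v := by
  by_contra hne
  have := one_le_wlen S (S.sp u v) hne
  rw [Setting.d] at h
  linarith

lemma d_le_wlen (S : Setting V) {u v : V} (p : S.G.Walk u v) :
    S.d u v ≤ wlen S.w p := S.sp_shortest u v p

/-- Splitting a shortest path at a vertex: both pieces are the shortest paths. -/
lemma split (S : Setting V) {u v x : V} {p1 : S.G.Walk u x} {p2 : S.G.Walk x v}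
    (h : S.sp u v = p1.append p2) :
    p1 = S.sp u x ∧ p2 = S.sp x v ∧ S.d u x + S.d x v = S.d u v ∧
      wlen S.w p1 = S.d u x ∧ wlen S.w p2 = S.d x v := by
  have h1 : S.d u x ≤ wlen S.w p1 := d_le_wlen S p1
  have h2 : S.d x v ≤ wlen S.w p2 := d_le_wlen S p2
  have hsum : S.d u v = wlen S.w p1 + wlen S.w p2 := by
    rw [Setting.d, h, wlen_append]
  have h3 : S.d u v ≤ S.d u x + S.d x v := by
    have := S.sp_shortest u v ((S.sp u x).append (S.sp x v))
    rwa [wlen_append] at this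
  have e1 : wlen S.w p1 = S.d u x := by linarith
  have e2 : wlen S.w p2 = S.d x v := by linarith
  have hp : (S.sp u v).IsPath := S.sp_isPath u v
  rw [h] at hp
  refine ⟨?_, ?_, by linarith, e1, e2⟩
  · exact S.sp_unique u x p1 hp.of_append_left (by rw [e1]; rfl)
  · exact S.sp_unique x v p2 hp.of_append_right (by rw [e2]; rfl)

/-- A vertex on a shortest path splits the distance. -/
lemma d_add_d (S : Setting V) {u v c : V} (hc : c ∈ (S.sp u v).support) :
    S.d u c + S.d c v = S.d u v := by
  classical
  have h := ((S.sp u v).take_spec hc).symm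
  exact (split S h).2.2.1

lemma subwalk_support_subset {G : SimpleGraph V} {u v a b : V}
    {p : G.Walk u v} {q : G.Walk a b} (h : _root_.IsSubwalk p q) :
    ∀ x ∈ p.support, x ∈ q.support := by
  obtain ⟨q1, q2, rfl⟩ := h
  intro x hx
  rw [Walk.mem_support_append_iff, Walk.mem_support_append_iff]
  tauto

/-- Crossing lemma: in a walk of small max edge weight, some prefix has length
in `(θ, θ + M]`. -/
lemma crossing {G : SimpleGraph V} (wt : Sym2 V → ℝ) (M : ℝ) :
    ∀ {u v : V} (p : G.Walk u v) (θ : ℝ), 0 ≤ θ → θ < wlen wt p →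
      (∀ e ∈ p.edges, wt e ≤ M) →
      ∃ (x : V) (p1 : G.Walk u x) (p2 : G.Walk x v),
        p = p1.append p2 ∧ θ < wlen wt p1 ∧ wlen wt p1 ≤ θ + M := by
  intro u v p
  induction p with
  | nil =>
    intro θ h0 hlt _
    rw [wlen_nil] at hlt
    linarith
  | @cons u x y h p ih =>
    intro θ h0 hlt hM
    have hMe : wt s(u, x) ≤ M := hM _ (by simp [Walk.edges_cons])
    rw [wlen_cons] at hlt
    by_cases hθ : θ < wt s(u, x)
    · refine ⟨x, Walk.cons h Walk.nil, p, by simp, ?_, ?_⟩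
      · rw [wlen_cons, wlen_nil]; linarith
      · rw [wlen_cons, wlen_nil]; linarith
    · push_neg at hθ
      obtain ⟨z, p1, p2, hsp, hl1, hl2⟩ :=
        ih (θ - wt s(u, x)) (by linarith) (by linarith)
          (fun e he => hM e (by simp [Walk.edges_cons, he]))
      refine ⟨z, Walk.cons h p1, p2, ?_, ?_, ?_⟩
      · rw [Walk.cons_append, hsp]
      · rw [wlen_cons]; linarith
      · rw [wlen_cons]; linarith

end StmtAux

namespace StmtAux

variable {V : Type} [Fintype V]

/-- **Main lemma**: the greedy-chosen midpoint vertex of a considered pair lies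
on a path-cover element that is a subwalk of the pair's shortest path. -/
lemma main_lemma (S : Setting V) {k η : ℕ} {i : ℤ}
    {Cm : Set V} (hCm : S.IsVertexCover ((8 : ℝ) ^ (i - 1)) k Cm)
    {P : Set (V × V)} (hP : S.IsPathCover ((8 : ℝ) ^ i) η P)
    {v1 v2 c : V} (hcons : S.Considered Cm i (v1, v2))
    (hcsupp : c ∈ (S.sp v1 v2).support)
    (hmin : ∀ c' ∈ Cm, c' ∈ (S.sp v1 v2).support →
      |S.d v1 c - S.d v1 v2 / 2| ≤ |S.d v1 c' - S.d v1 v2 / 2|) :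
    ∃ q ∈ P, IsSubwalk (S.sp q.1 q.2) (S.sp v1 v2) ∧
      c ∈ (S.sp q.1 q.2).support := by
  obtain ⟨-, -, hd1, hd2, hme⟩ := hcons
  set M : ℝ := (8 : ℝ) ^ (i - 1) with hMdef
  have hMpos : (0 : ℝ) < M := zpow_pos (by norm_num) _
  have h8 : (8 : ℝ) ^ i = M * 8 := by
    rw [hMdef, ← zpow_add_one₀ (by norm_num : (8 : ℝ) ≠ 0) (i - 1)]
    norm_num
  set D : ℝ := S.d v1 v2 with hDdef
  have hD6 : 6 * M ≤ D := by
    have : 3 / 4 * ((8 : ℝ) ^ i) = 6 * M := by rw [h8]; ring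
    simp only [this] at hd1; exact hd1
  have hD8 : D ≤ 8 * M := by rw [h8] at hd2; linarith
  have hwlen : wlen S.w (S.sp v1 v2) = D := rfl
  have hmeM : ∀ e ∈ (S.sp v1 v2).edges, S.w e ≤ M := hme
  -- first crossing: vertex a
  obtain ⟨a, p1, p2, hsplA, ha1, ha2⟩ :=
    crossing S.w M (S.sp v1 v2) (D / 2 - 2 * M) (by linarith)
      (by rw [hwlen]; linarith) hmeM
  obtain ⟨hp1, hp2, haddA, hw1, hw2⟩ := split S hsplA
  have hta1 : D / 2 - 2 * M < S.d v1 a := by rwa [hw1] at ha1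
  have hta2 : S.d v1 a ≤ D / 2 - M := by rw [hw1] at ha2; linarith
  -- second crossing: vertex b
  obtain ⟨b, p3, p4, hsplB, hb1, hb2⟩ :=
    crossing S.w M p2 (D / 2 + M - S.d v1 a) (by linarith)
      (by rw [hw2]; linarith)
      (fun e he => hmeM e (by rw [hsplA, Walk.edges_append]
                              exact List.mem_append_right _ he))
  have hassoc : S.sp v1 v2 = (p1.append p3).append p4 := by
    rw [hsplA, hsplB]; exact Walk.append_assoc _ _ _
  obtain ⟨hp13, hp4, haddB, hw13, hw4⟩ := split S hassoc
  obtain ⟨hp1', hp3, haddC, hw1', hw3⟩ := split S hp13.symm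
  have hdab : S.d a b = wlen S.w p3 := hw3.symm
  have hdab1 : D / 2 + M - S.d v1 a < S.d a b := by rw [hdab]; exact hb1
  have hdab2 : S.d a b ≤ D / 2 + 2 * M - S.d v1 a := by rw [hdab]; linarith
  have htb : S.d v1 b = S.d v1 a + S.d a b := haddC.symm
  -- vertex cover gives c0 ∈ Cm near the midpoint
  obtain ⟨c0, hc0Cm, hc0supp⟩ := hCm.1 a b (by linarith)
    (by intro e he
        rw [← hp3] at he
        apply hme e
        rw [hassoc, Walk.edges_append, Walk.edges_append]
        exact List.mem_append_left _ (List.mem_append_right _ he))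
  have hc0p3 : c0 ∈ p3.support := by rwa [hp3]
  have hc0vb : c0 ∈ (S.sp v1 b).support := by
    rw [← hp13, Walk.mem_support_append_iff]; right; exact hc0p3
  have hsum1 : S.d a c0 + S.d c0 b = S.d a b := d_add_d S hc0supp
  have hsum2 : S.d v1 c0 + S.d c0 b = S.d v1 b := d_add_d S hc0vb
  have hac0 : 0 ≤ S.d a c0 := d_nonneg S _ _
  have hc0b : 0 ≤ S.d c0 b := d_nonneg S _ _
  have hc0lo : D / 2 - 2 * M < S.d v1 c0 := by linarith
  have hc0hi : S.d v1 c0 ≤ D / 2 + 2 * M := by linarith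
  have hc0in : c0 ∈ (S.sp v1 v2).support := by
    rw [hassoc, Walk.mem_support_append_iff]; left
    rw [Walk.mem_support_append_iff]; right; exact hc0p3
  -- the minimizer c is within 2M of the midpoint
  have hcabs : |S.d v1 c - D / 2| ≤ 2 * M := by
    have h1 := hmin c0 hc0Cm hc0in
    have h2 : |S.d v1 c0 - D / 2| ≤ 2 * M := abs_le.mpr ⟨by linarith, by linarith⟩
    calc |S.d v1 c - D / 2| ≤ |S.d v1 c0 - D / 2| := h1
      _ ≤ 2 * M := h2
  obtain ⟨hclo, hchi⟩ := abs_le.mp hcabs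
  -- path cover element
  obtain ⟨q, hqP, hqsub, hq1, hq2⟩ := hP.2.1 v1 v2 (by rw [h8]; linarith)
    (by rw [h8]; linarith)
    (by intro e he
        have h := hme e he
        have : (8 : ℝ) ^ i / 8 = M := by rw [h8]; ring
        rw [this]; exact h)
  refine ⟨q, hqP, hqsub, ?_⟩
  have hq1M : S.d v1 q.1 ≤ M := by rw [h8] at hq1; linarith
  have hq2M : S.d q.2 v2 ≤ M := by rw [h8] at hq2; linarith
  obtain ⟨w1, w2, hW⟩ := hqsub
  obtain ⟨hWa, hWb, hWadd, hWw1, hWw2⟩ := split S hW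
  obtain ⟨hw1eq, -, hWadd2, -, -⟩ := split S hWa.symm
  have hcsum : S.d v1 c + S.d c v2 = D := d_add_d S hcsupp
  rw [hW] at hcsupp
  rcases (Walk.mem_support_append_iff _ _).mp hcsupp with h | h
  · rcases (Walk.mem_support_append_iff _ _).mp h with h' | h'
    · -- c on the initial segment: c = q.1
      have hc1 : c ∈ (S.sp v1 q.1).support := by rwa [← hw1eq]
      have hs := d_add_d S hc1
      have : S.d c q.1 ≤ 0 := by linarith
      have := eq_of_d_le_zero S this
      rw [this]; exact Walk.start_mem_support _
    · exact h'
  · -- c on the final segment: c = q.2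
    have hc2 : c ∈ (S.sp q.2 v2).support := by rwa [← hWb]
    have hs := d_add_d S hc2
    have hcv2 : 0 ≤ S.d c v2 := d_nonneg S _ _
    have : S.d q.2 c ≤ 0 := by linarith
    have := eq_of_d_le_zero S this
    rw [← this]; exact Walk.end_mem_support _

end StmtAux

/-- Sparseness of the greedy output: if `Cm` is an
`(8^(i-1),k)` vertex cover, `P` an `(8^i,η)` path cover and `C'` a valid greedy
output at level `i`, then `|C' ∩ B(v,2·8^i)| ≤ η` for every `v`. -/
theorem stmt9 {V : Type} [Fintype V] (S : Setting V) (k η : ℕ) (i : ℤ) (hi : 0 ≤ i)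
    (Cm : Set V) (hCm : S.IsVertexCover ((8 : ℝ) ^ (i - 1)) k Cm)
    (P : Set (V × V)) (hP : S.IsPathCover ((8 : ℝ) ^ i) η P)
    (C' : Set V) (hsub : C' ⊆ Cm) (hgreedy : S.ValidGreedy Cm i C') :
    ∀ v : V, (C' ∩ S.ball v (2 * (8 : ℝ) ^ i)).ncard ≤ η := by
  intro v
  classical
  obtain ⟨m, pr, hprinj, hiff, Sc, hS0, hSlast, hstep⟩ := hgreedy
  have ScEq : ∀ (a b : Fin (m + 1)), (a : ℕ) = (b : ℕ) → Sc a = Sc b :=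
    fun a b h => congrArg Sc (Fin.ext h)
  -- one greedy step is monotone
  have stepmono : ∀ j : Fin m, Sc j.castSucc ⊆ Sc j.succ := by
    intro j
    by_cases hex : ∃ c ∈ Sc j.castSucc, c ∈ (S.sp (pr j).1 (pr j).2).support
    · rw [(hstep j).1 hex]
    · obtain ⟨c, -, -, -, hins⟩ := (hstep j).2 hex
      rw [hins]; exact Set.subset_insert _ _
  -- the chain is monotone
  have mono : ∀ (bn : ℕ) (hb : bn < m + 1) (n : Fin (m + 1)), (n : ℕ) ≤ bn →
      Sc n ⊆ Sc ⟨bn, hb⟩ := by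
    intro bn
    induction bn with
    | zero =>
      intro hb n hn
      rw [ScEq n ⟨0, hb⟩ (by simp only [Fin.val_mk]; omega)]
    | succ bn ih =>
      intro hb n hn
      by_cases hc : (n : ℕ) ≤ bn
      · have hbm : bn < m := by omega
        have h1 := ih (by omega) n hc
        have h2 := stepmono ⟨bn, hbm⟩
        rw [ScEq (⟨bn, hbm⟩ : Fin m).castSucc ⟨bn, by omega⟩ (by simp),
          ScEq (⟨bn, hbm⟩ : Fin m).succ ⟨bn + 1, hb⟩ (by simp)] at h2
        exact h1.trans h2
      · rw [ScEq n ⟨bn + 1, hb⟩ (by simp only [Fin.val_mk]; omega)]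
  -- every element of the chain was added at some step, as a midpoint minimizer
  have added : ∀ (n : ℕ) (hn : n < m + 1) (c : V), c ∈ Sc ⟨n, hn⟩ →
      ∃ j : Fin m, c ∉ Sc j.castSucc ∧
        (¬ ∃ c'' ∈ Sc j.castSucc, c'' ∈ (S.sp (pr j).1 (pr j).2).support) ∧
        c ∈ Cm ∧ c ∈ (S.sp (pr j).1 (pr j).2).support ∧
        (∀ c' ∈ Cm, c' ∈ (S.sp (pr j).1 (pr j).2).support →
          |S.d (pr j).1 c - S.d (pr j).1 (pr j).2 / 2| ≤
            |S.d (pr j).1 c' - S.d (pr j).1 (pr j).2 / 2|) ∧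
        Sc j.succ = insert c (Sc j.castSucc) := by
    intro n
    induction n with
    | zero =>
      intro hn c hc
      rw [ScEq ⟨0, hn⟩ 0 (by simp), hS0] at hc
      exact absurd hc (Set.notMem_empty c)
    | succ n ih =>
      intro hn c hc
      have hnm : n < m := by omega
      set j : Fin m := ⟨n, hnm⟩ with hj
      have e2 : Sc ⟨n + 1, hn⟩ = Sc j.succ := ScEq _ _ (by simp [hj])
      rw [e2] at hc
      by_cases hcn : c ∈ Sc j.castSucc
      · exact ih (by omega) c (by rwa [ScEq ⟨n, by omega⟩ j.castSucc (by simp [hj])])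
      · by_cases hex : ∃ c'' ∈ Sc j.castSucc, c'' ∈ (S.sp (pr j).1 (pr j).2).support
        · rw [(hstep j).1 hex] at hc
          exact absurd hc hcn
        · obtain ⟨c1, hc1Cm, hc1supp, hc1min, hins⟩ := (hstep j).2 hex
          rw [hins] at hc
          rcases Set.mem_insert_iff.mp hc with rfl | hc'
          · exact ⟨j, hcn, hex, hc1Cm, hc1supp, hc1min, hins⟩
          · exact absurd hc' hcn
  -- the assignment of a path cover element to each vertex of C'
  set T : Set (V × V) :=
    {q ∈ P | ∃ x ∈ (S.sp q.1 q.2).support, S.d v x ≤ 4 * (8 : ℝ) ^ i} with hT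
  have hTcard : T.ncard ≤ η := hP.2.2 v
  set s : Set V := C' ∩ S.ball v (2 * (8 : ℝ) ^ i) with hs
  have hpow : (0 : ℝ) < (8 : ℝ) ^ i := zpow_pos (by norm_num) _
  have H : ∀ c ∈ s, ∃ Q : V × V, ∃ j : Fin m, Q ∈ T ∧
      c ∈ (S.sp Q.1 Q.2).support ∧ c ∉ Sc j.castSucc ∧
      (¬ ∃ c'' ∈ Sc j.castSucc, c'' ∈ (S.sp (pr j).1 (pr j).2).support) ∧
      Sc j.succ = insert c (Sc j.castSucc) ∧
      IsSubwalk (S.sp Q.1 Q.2) (S.sp (pr j).1 (pr j).2) := by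
    intro c hc
    obtain ⟨hcC', hcball⟩ := hc
    have hcSc : c ∈ Sc ⟨m, by omega⟩ := by
      rw [ScEq ⟨m, by omega⟩ (Fin.last m) (by simp), hSlast]; exact hcC'
    obtain ⟨j, hj1, hj2, hj3, hj4, hj5, hj6⟩ := added m (by omega) c hcSc
    have hcons : S.Considered Cm i (pr j) := (hiff (pr j)).mpr ⟨j, rfl⟩
    obtain ⟨Q, hQP, hQsub, hQsupp⟩ := StmtAux.main_lemma S hCm hP hcons hj4 hj5
    refine ⟨Q, j, ⟨hQP, c, hQsupp, ?_⟩, hQsupp, hj1, hj2, hj6, hQsub⟩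
    have : S.d v c ≤ 2 * (8 : ℝ) ^ i := hcball
    linarith
  choose! f jf hfT hfsupp hjf1 hjf2 hjf3 hjfsub using H
  rcases Set.eq_empty_or_nonempty s with hse | hsne
  · rw [hse]; simp
  have key : ∀ (c : V) (hc : c ∈ s) (c' : V) (hc' : c' ∈ s), f c = f c' →
      ((jf c hc : ℕ) < (jf c' hc' : ℕ)) → False := by
    intro c hc c' hc' hfeq hlt
    apply hjf2 c' hc'
    refine ⟨c, ?_, ?_⟩
    · -- c ∈ Sc (jf c').castSucc
      have h1 : c ∈ Sc (jf c hc).succ := by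
        rw [hjf3 c hc]; exact Set.mem_insert _ _
      have h2 := mono ((jf c' hc' : ℕ)) (by omega) ((jf c hc).succ)
        (by simp only [Fin.val_succ]; omega)
      have h3 := h2 h1
      rwa [ScEq ⟨(jf c' hc' : ℕ), by omega⟩ (jf c' hc').castSucc (by simp)] at h3
    · -- c is on the shortest path of pair (pr (jf c'))
      apply StmtAux.subwalk_support_subset (hjfsub c' hc')
      rw [← hfeq]
      exact hfsupp c hc
  have hinj : Set.InjOn f s := by
    intro c hc c' hc' hfeq
    rcases lt_trichotomy ((jf c hc : ℕ)) ((jf c' hc' : ℕ)) with hlt | heq | hgt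
    · exact absurd (key c hc c' hc' hfeq hlt) not_false
    · have hjeq : jf c hc = jf c' hc' := Fin.ext heq
      have h1 := hjf3 c hc
      have h2 := hjf3 c' hc'
      rw [hjeq] at h1
      have hmem : c ∈ insert c' (Sc (jf c' hc').castSucc) := by
        rw [← h2, h1]; exact Set.mem_insert _ _
      rcases Set.mem_insert_iff.mp hmem with h | h
      · exact h
      · have := hjf1 c hc
        rw [hjeq] at this
        exact absurd h this
    · exact absurd (key c' hc' c hc hfeq.symm hgt) not_false
  calc s.ncard ≤ T.ncard :=
        Set.ncard_le_ncard_of_injOn f (fun c hc => hfT c hc) hinj (Set.toFinite T)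
    _ ≤ η := hTcard
end
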